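/- arXiv:2006.09297 — 5 statements merged into one kernel-verified Lean document; each statement's English description precedes it below -/
import Mathlib

section
/- Gradient of the reduced cost functional: the function Ĵ is differentiable at μ₀ and its gradient is given componentwise, for 1 ≤ i ≤ P, by (∇Ĵ(μ₀))_i = ∂_i Θ(μ₀) + Σ_ξ ∂_i θ^j_ξ(μ₀) j_ξ(u_{μ₀}) + Σ_ξ ∂_i θ^k_ξ(μ₀) k_ξ(u_{μ₀}, u_{μ₀}) + Σ_ξ ∂_i θ^l_ξ(μ₀) l_ξ(p_{μ₀}) − Σ_ξ ∂_i θ^a_ξ(μ₀) a_ξ(u_{μ₀}, p_{μ₀}), where p_{μ₀} ∈ V is the dual solution. -/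
/-! By Lax–Milgram, `a_{μ₀}` is an isomorphism `V ≃ V*`; inversion of operators is smooth, so
`u_μ = a_μ⁻¹ l_μ` is differentiable at `μ₀`. Differentiating `Ĵ` in a direction `h` leaves the
unknown sensitivity `δu = u'(μ₀) h` only in `j_{μ₀}(δu) + 2 k_{μ₀}(δu, u_{μ₀})`. By the dual equation
this is `a_{μ₀}(δu, p_{μ₀})`, and the differentiated primal equation
`a_{μ₀}(δu, ·) + a'(h)(u_{μ₀}, ·) = l'(h)` tested with `p_{μ₀}` turns it into
`l'(h)(p_{μ₀}) - a'(h)(u_{μ₀}, p_{μ₀})`. -/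

open Filter Topology

theorem ContinuousAt.eventually_isInvertible {𝕜 X E F : Type*} [NontriviallyNormedField 𝕜]
    [TopologicalSpace X] [NormedAddCommGroup E] [NormedSpace 𝕜 E] [CompleteSpace E]
    [NormedAddCommGroup F] [NormedSpace 𝕜 F] {T : X → E →L[𝕜] F} {x₀ : X}
    (hT : ContinuousAt T x₀) (h : (T x₀).IsInvertible) :
    ∀ᶠ x in 𝓝 x₀, (T x).IsInvertible := by
  obtain ⟨e, he⟩ := h
  exact hT.eventually_mem (he ▸ ContinuousLinearEquiv.nhds e)

section Calculus

variable {𝕜 X E F : Type*} [NontriviallyNormedField 𝕜]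
  [NormedAddCommGroup X] [NormedSpace 𝕜 X] [NormedAddCommGroup E] [NormedSpace 𝕜 E]
  [NormedAddCommGroup F] [NormedSpace 𝕜 F] {x₀ : X}

theorem hasFDerivAt_sum_smul_const {ι : Type*} [Fintype ι] {θ : ι → X → 𝕜}
    {θ' : ι → X →L[𝕜] 𝕜} (hθ : ∀ i, HasFDerivAt (θ i) (θ' i) x₀) (f : ι → E) :
    HasFDerivAt (fun x => ∑ i, θ i x • f i) (∑ i, (θ' i).smulRight (f i)) x₀ :=
  HasFDerivAt.fun_sum fun i _ => (hθ i).smul_const (f i)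

theorem DifferentiableAt.of_eventually_clm_apply_eq [CompleteSpace E] {T : X → E →L[𝕜] F}
    {f : X → F} {u : X → E} (hT : DifferentiableAt 𝕜 T x₀) (hf : DifferentiableAt 𝕜 f x₀)
    (hinv : (T x₀).IsInvertible) (hu : ∀ᶠ x in 𝓝 x₀, T x (u x) = f x) :
    DifferentiableAt 𝕜 u x₀ := by
  have hu_eq : u =ᶠ[𝓝 x₀] fun x => (T x).inverse (f x) := by
    filter_upwards [hT.continuousAt.eventually_isInvertible hinv, hu] with x hx hxu
    exact ((hx.inverse_apply_eq).2 hxu.symm).symm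
  have hinverse : DifferentiableAt 𝕜 (fun x => (T x).inverse) x₀ :=
    ((hinv.contDiffAt_map_inverse (n := 1)).differentiableAt one_ne_zero).comp x₀ hT
  exact (hinverse.clm_apply hf).congr_of_eventuallyEq hu_eq

theorem HasFDerivAt.apply_add_apply_eq_of_eventually_clm_apply_eq {T : X → E →L[𝕜] F}
    {T' : X →L[𝕜] E →L[𝕜] F} {f : X → F} {f' : X →L[𝕜] F} {u : X → E} {u' : X →L[𝕜] E}
    (hT : HasFDerivAt T T' x₀) (hf : HasFDerivAt f f' x₀) (hu' : HasFDerivAt u u' x₀)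
    (hu : ∀ᶠ x in 𝓝 x₀, T x (u x) = f x) (h : X) :
    T x₀ (u' h) + T' h (u x₀) = f' h := by
  have hTu : HasFDerivAt f ((T x₀).comp u' + T'.flip (u x₀)) x₀ :=
    (hT.clm_apply hu').congr_of_eventuallyEq (hu.mono fun _ hx => hx.symm)
  simpa using congr($(hTu.unique hf) h)

theorem exists_hasFDerivAt_reducedCost_of_adjoint [CompleteSpace E]
    {a k : X → E →L[𝕜] E →L[𝕜] 𝕜} {a' k' : X →L[𝕜] E →L[𝕜] E →L[𝕜] 𝕜}
    {l j : X → E →L[𝕜] 𝕜} {l' j' : X →L[𝕜] E →L[𝕜] 𝕜} {Θ : X → 𝕜} {Θ' : X →L[𝕜] 𝕜}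
    {u : X → E} {p : E}
    (ha : HasFDerivAt a a' x₀) (hl : HasFDerivAt l l' x₀) (hj : HasFDerivAt j j' x₀)
    (hk : HasFDerivAt k k' x₀) (hΘ : HasFDerivAt Θ Θ' x₀)
    (hinv : (a x₀).IsInvertible) (hk_symm : ∀ v w, k x₀ v w = k x₀ w v)
    (hu : ∀ᶠ x in 𝓝 x₀, a x (u x) = l x) (hp : ∀ v, a x₀ v p = j x₀ v + 2 * k x₀ v (u x₀)) :
    ∃ D : X →L[𝕜] 𝕜, HasFDerivAt (fun x => Θ x + j x (u x) + k x (u x) (u x)) D x₀ ∧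
      ∀ h, D h = Θ' h + j' h (u x₀) + k' h (u x₀) (u x₀) + l' h p - a' h (u x₀) p := by
  obtain ⟨u', hu'⟩ : ∃ u', HasFDerivAt u u' x₀ :=
    ⟨_, (ha.differentiableAt.of_eventually_clm_apply_eq hl.differentiableAt hinv hu).hasFDerivAt⟩
  refine ⟨_, (hΘ.add (hj.clm_apply hu')).add ((hk.clm_apply hu').clm_apply hu'), fun h => ?_⟩
  have hstate := congr($(ha.apply_add_apply_eq_of_eventually_clm_apply_eq hl hu' hu h) p)
  simp only [add_apply] at hstate
  simp only [add_apply, ContinuousLinearMap.coe_comp, Function.comp_apply,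
    ContinuousLinearMap.flip_apply]
  linear_combination hstate - hp (u' h) + hk_symm (u x₀) (u' h)

end Calculus

theorem IsCoercive.isInvertible {V : Type*} [NormedAddCommGroup V] [InnerProductSpace ℝ V]
    [CompleteSpace V] {B : V →L[ℝ] V →L[ℝ] ℝ} (hB : IsCoercive B) : B.IsInvertible :=
  ⟨hB.continuousLinearEquivOfBilin.trans (InnerProductSpace.toDual ℝ V).toContinuousLinearEquiv,
    by ext v w; simp⟩

theorem stmt_4_general
    {V : Type*} [NormedAddCommGroup V] [InnerProductSpace ℝ V] [CompleteSpace V]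
    {P na nl nj nk : ℕ}
    (A : Fin na → V →L[ℝ] V →L[ℝ] ℝ) (θa : Fin na → EuclideanSpace ℝ (Fin P) → ℝ)
    (L : Fin nl → V →L[ℝ] ℝ) (θl : Fin nl → EuclideanSpace ℝ (Fin P) → ℝ)
    (Jf : Fin nj → V →L[ℝ] ℝ) (θj : Fin nj → EuclideanSpace ℝ (Fin P) → ℝ)
    (K : Fin nk → V →L[ℝ] V →L[ℝ] ℝ) (θk : Fin nk → EuclideanSpace ℝ (Fin P) → ℝ)
    (hK_sym : ∀ ξ (v w : V), K ξ v w = K ξ w v)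
    (aμ : EuclideanSpace ℝ (Fin P) → V →L[ℝ] V →L[ℝ] ℝ)
    (haμ : ∀ μ, aμ μ = ∑ ξ : Fin na, θa ξ μ • A ξ)
    (lμ : EuclideanSpace ℝ (Fin P) → V →L[ℝ] ℝ)
    (hlμ : ∀ μ, lμ μ = ∑ ξ : Fin nl, θl ξ μ • L ξ)
    (jμ : EuclideanSpace ℝ (Fin P) → V →L[ℝ] ℝ)
    (hjμ : ∀ μ, jμ μ = ∑ ξ : Fin nj, θj ξ μ • Jf ξ)
    (kμ : EuclideanSpace ℝ (Fin P) → V →L[ℝ] V →L[ℝ] ℝ)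
    (hkμ : ∀ μ, kμ μ = ∑ ξ : Fin nk, θk ξ μ • K ξ)
    (μ₀ : EuclideanSpace ℝ (Fin P))
    (Dθa : Fin na → EuclideanSpace ℝ (Fin P) →L[ℝ] ℝ)
    (hDθa : ∀ ξ, HasFDerivAt (θa ξ) (Dθa ξ) μ₀)
    (Dθl : Fin nl → EuclideanSpace ℝ (Fin P) →L[ℝ] ℝ)
    (hDθl : ∀ ξ, HasFDerivAt (θl ξ) (Dθl ξ) μ₀)
    (Dθj : Fin nj → EuclideanSpace ℝ (Fin P) →L[ℝ] ℝ)
    (hDθj : ∀ ξ, HasFDerivAt (θj ξ) (Dθj ξ) μ₀)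
    (Dθk : Fin nk → EuclideanSpace ℝ (Fin P) →L[ℝ] ℝ)
    (hDθk : ∀ ξ, HasFDerivAt (θk ξ) (Dθk ξ) μ₀)
    (Θ : EuclideanSpace ℝ (Fin P) → ℝ)
    (DΘ : EuclideanSpace ℝ (Fin P) →L[ℝ] ℝ) (hDΘ : HasFDerivAt Θ DΘ μ₀)
    (U : Set (EuclideanSpace ℝ (Fin P))) (hU : U ∈ nhds μ₀)
    (α : ℝ) (hα : 0 < α)
    (ha_coer : ∀ μ ∈ U, ∀ v : V, α * ‖v‖ ^ 2 ≤ aμ μ v v)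
    (u : EuclideanSpace ℝ (Fin P) → V)
    (hu : ∀ μ ∈ U, ∀ v : V, aμ μ (u μ) v = lμ μ v)
    (p : EuclideanSpace ℝ (Fin P) → V)
    (hp : ∀ μ ∈ U, ∀ v : V, aμ μ v (p μ) = jμ μ v + 2 * kμ μ v (u μ))
    (Jhat : EuclideanSpace ℝ (Fin P) → ℝ)
    (hJhat : ∀ μ, Jhat μ = Θ μ + jμ μ (u μ) + kμ μ (u μ) (u μ)) :
    ∃ D : EuclideanSpace ℝ (Fin P) →L[ℝ] ℝ,
      HasFDerivAt Jhat D μ₀ ∧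
      ∀ i : Fin P,
        D (EuclideanSpace.single i 1)
          = DΘ (EuclideanSpace.single i 1)
            + (∑ ξ : Fin nj, Dθj ξ (EuclideanSpace.single i 1) * Jf ξ (u μ₀))
            + (∑ ξ : Fin nk, Dθk ξ (EuclideanSpace.single i 1) * K ξ (u μ₀) (u μ₀))
            + (∑ ξ : Fin nl, Dθl ξ (EuclideanSpace.single i 1) * L ξ (p μ₀))
            - (∑ ξ : Fin na, Dθa ξ (EuclideanSpace.single i 1) * A ξ (u μ₀) (p μ₀)) := by
  have hμ₀ : μ₀ ∈ U := mem_of_mem_nhds hU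
  have hcoer : IsCoercive (aμ μ₀) :=
    ⟨α, hα, fun v => by simpa [pow_two, mul_assoc] using ha_coer μ₀ hμ₀ v⟩
  obtain ⟨D, hD, hD_apply⟩ := exists_hasFDerivAt_reducedCost_of_adjoint
    (funext haμ ▸ hasFDerivAt_sum_smul_const hDθa A)
    (funext hlμ ▸ hasFDerivAt_sum_smul_const hDθl L)
    (funext hjμ ▸ hasFDerivAt_sum_smul_const hDθj Jf)
    (funext hkμ ▸ hasFDerivAt_sum_smul_const hDθk K) hDΘ hcoer.isInvertible
    (fun v w => by simp [hkμ, hK_sym _ v w])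
    (eventually_of_mem hU fun μ hμ => ContinuousLinearMap.ext (hu μ hμ)) (hp μ₀ hμ₀)
  refine ⟨D, hD.congr_of_eventuallyEq (Eventually.of_forall hJhat), fun i => ?_⟩
  simp [hD_apply, mul_comm]

/-- Gradient of the reduced cost functional: `Ĵ` is differentiable at `μ₀` and, for each
`1 ≤ i ≤ P`,
`(∇Ĵ(μ₀))_i = ∂_i Θ(μ₀) + Σ_ξ ∂_i θ^j_ξ(μ₀) j_ξ(u_{μ₀}) + Σ_ξ ∂_i θ^k_ξ(μ₀) k_ξ(u_{μ₀}, u_{μ₀})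
 + Σ_ξ ∂_i θ^l_ξ(μ₀) l_ξ(p_{μ₀}) − Σ_ξ ∂_i θ^a_ξ(μ₀) a_ξ(u_{μ₀}, p_{μ₀})`,
where `p_{μ₀}` is the dual solution. -/
theorem stmt_4
    {V : Type*} [NormedAddCommGroup V] [InnerProductSpace ℝ V] [CompleteSpace V]
    {P na nl nj nk : ℕ}
    (A : Fin na → V →L[ℝ] V →L[ℝ] ℝ) (θa : Fin na → EuclideanSpace ℝ (Fin P) → ℝ)
    (L : Fin nl → V →L[ℝ] ℝ) (θl : Fin nl → EuclideanSpace ℝ (Fin P) → ℝ)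
    (Jf : Fin nj → V →L[ℝ] ℝ) (θj : Fin nj → EuclideanSpace ℝ (Fin P) → ℝ)
    (K : Fin nk → V →L[ℝ] V →L[ℝ] ℝ) (θk : Fin nk → EuclideanSpace ℝ (Fin P) → ℝ)
    (hK_sym : ∀ ξ (v w : V), K ξ v w = K ξ w v)
    (aμ : EuclideanSpace ℝ (Fin P) → V →L[ℝ] V →L[ℝ] ℝ)
    (haμ : ∀ μ, aμ μ = ∑ ξ : Fin na, θa ξ μ • A ξ)
    (lμ : EuclideanSpace ℝ (Fin P) → V →L[ℝ] ℝ)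
    (hlμ : ∀ μ, lμ μ = ∑ ξ : Fin nl, θl ξ μ • L ξ)
    (jμ : EuclideanSpace ℝ (Fin P) → V →L[ℝ] ℝ)
    (hjμ : ∀ μ, jμ μ = ∑ ξ : Fin nj, θj ξ μ • Jf ξ)
    (kμ : EuclideanSpace ℝ (Fin P) → V →L[ℝ] V →L[ℝ] ℝ)
    (hkμ : ∀ μ, kμ μ = ∑ ξ : Fin nk, θk ξ μ • K ξ)
    (μ₀ : EuclideanSpace ℝ (Fin P))
    (Dθa : Fin na → EuclideanSpace ℝ (Fin P) →L[ℝ] ℝ)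
    (hDθa : ∀ ξ, HasFDerivAt (θa ξ) (Dθa ξ) μ₀)
    (Dθl : Fin nl → EuclideanSpace ℝ (Fin P) →L[ℝ] ℝ)
    (hDθl : ∀ ξ, HasFDerivAt (θl ξ) (Dθl ξ) μ₀)
    (Dθj : Fin nj → EuclideanSpace ℝ (Fin P) →L[ℝ] ℝ)
    (hDθj : ∀ ξ, HasFDerivAt (θj ξ) (Dθj ξ) μ₀)
    (Dθk : Fin nk → EuclideanSpace ℝ (Fin P) →L[ℝ] ℝ)
    (hDθk : ∀ ξ, HasFDerivAt (θk ξ) (Dθk ξ) μ₀)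
    (Θ : EuclideanSpace ℝ (Fin P) → ℝ)
    (DΘ : EuclideanSpace ℝ (Fin P) →L[ℝ] ℝ) (hDΘ : HasFDerivAt Θ DΘ μ₀)
    (U : Set (EuclideanSpace ℝ (Fin P))) (hU : U ∈ nhds μ₀)
    (hθa_cont : ∀ ξ, ContinuousOn (θa ξ) U) (hθl_cont : ∀ ξ, ContinuousOn (θl ξ) U)
    (hθj_cont : ∀ ξ, ContinuousOn (θj ξ) U) (hθk_cont : ∀ ξ, ContinuousOn (θk ξ) U)
    (hΘ_cont : ContinuousOn Θ U)
    (ha_sym : ∀ μ ∈ U, ∀ v w : V, aμ μ v w = aμ μ w v)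
    (α : ℝ) (hα : 0 < α)
    (ha_coer : ∀ μ ∈ U, ∀ v : V, α * ‖v‖ ^ 2 ≤ aμ μ v v)
    (u : EuclideanSpace ℝ (Fin P) → V)
    (hu : ∀ μ ∈ U, ∀ v : V, aμ μ (u μ) v = lμ μ v)
    (p : EuclideanSpace ℝ (Fin P) → V)
    (hp : ∀ μ ∈ U, ∀ v : V, aμ μ v (p μ) = jμ μ v + 2 * kμ μ v (u μ))
    (Jhat : EuclideanSpace ℝ (Fin P) → ℝ)
    (hJhat : ∀ μ, Jhat μ = Θ μ + jμ μ (u μ) + kμ μ (u μ) (u μ)) :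
    ∃ D : EuclideanSpace ℝ (Fin P) →L[ℝ] ℝ,
      HasFDerivAt Jhat D μ₀ ∧
      ∀ i : Fin P,
        D (EuclideanSpace.single i 1)
          = DΘ (EuclideanSpace.single i 1)
            + (∑ ξ : Fin nj, Dθj ξ (EuclideanSpace.single i 1) * Jf ξ (u μ₀))
            + (∑ ξ : Fin nk, Dθk ξ (EuclideanSpace.single i 1) * K ξ (u μ₀) (u μ₀))
            + (∑ ξ : Fin nl, Dθl ξ (EuclideanSpace.single i 1) * L ξ (p μ₀))
            - (∑ ξ : Fin na, Dθa ξ (EuclideanSpace.single i 1) * A ξ (u μ₀) (p μ₀)) :=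
  stmt_4_general A θa L θl Jf θj K θk hK_sym aμ haμ lμ hlμ jμ hjμ kμ hkμ μ₀ Dθa hDθa Dθl hDθl Dθj
    hDθj Dθk hDθk Θ DΘ hDΘ U hU α hα ha_coer u hu p hp Jhat hJhat
end

section
/- Residual-based upper bound on the model reduction error of the primal sensitivity: ‖du_h − du_r‖ ≤ Δ_dpr := α⁻¹ (‖da‖ Δ_pr + ‖r^{pr,d}(u_r, du_r)‖). -/
/-
Coercivity turns any identity `a x · = f` into `α ‖x‖² ≤ a x x = f x ≤ ‖f‖ ‖x‖`, hence
`‖x‖ ≤ α⁻¹ ‖f‖`. The primal error `u_h - u_r` satisfies such an identity with the primal residual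
`l - a u_r`. The sensitivity error `du_h - du_r` satisfies it with the sensitivity residual
minus `da (u_h - u_r)`, whose norm is at most `‖dl - da u_r - a du_r‖ + ‖da‖ ‖u_h - u_r‖`.
-/

section Coercive

variable {V : Type*} [NormedAddCommGroup V] [NormedSpace ℝ V]
  {a : V →L[ℝ] V →L[ℝ] ℝ} {α : ℝ}

theorem norm_le_inv_mul_opNorm_of_coercive (hα : 0 < α) (ha : ∀ v, α * ‖v‖ ^ 2 ≤ a v v)
    {f : V →L[ℝ] ℝ} {x : V} (hx : a x x ≤ f x) : ‖x‖ ≤ α⁻¹ * ‖f‖ := by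
  have hsq : α * ‖x‖ * ‖x‖ ≤ ‖f‖ * ‖x‖ :=
    calc α * ‖x‖ * ‖x‖ = α * ‖x‖ ^ 2 := by ring
      _ ≤ a x x := ha x
      _ ≤ f x := hx
      _ ≤ ‖f‖ * ‖x‖ := (le_abs_self _).trans (f.le_opNorm x)
  rcases (norm_nonneg x).eq_or_lt with hx0 | hx0
  · rw [← hx0]
    positivity
  · rw [le_inv_mul_iff₀ hα]
    exact le_of_mul_le_mul_right hsq hx0

theorem norm_sub_le_of_coercive (hα : 0 < α) (ha : ∀ v, α * ‖v‖ ^ 2 ≤ a v v)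
    {f : V →L[ℝ] ℝ} {x y : V} (hx : ∀ v, a x v = f v) :
    ‖x - y‖ ≤ α⁻¹ * ‖f - a y‖ :=
  norm_le_inv_mul_opNorm_of_coercive hα ha (by simp [hx])

end Coercive

theorem stmt_15_general
    {V : Type*} [NormedAddCommGroup V] [InnerProductSpace ℝ V]
    (a : V →L[ℝ] V →L[ℝ] ℝ) (l : V →L[ℝ] ℝ)
    (α : ℝ) (hα : 0 < α)
    (ha_coer : ∀ v : V, α * ‖v‖ ^ 2 ≤ a v v)
    (u_h : V) (hu_h : ∀ v : V, a u_h v = l v)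
    (u_r : V)
    (dl : V →L[ℝ] ℝ) (da : V →L[ℝ] V →L[ℝ] ℝ)
    (du_h : V) (hdu_h : ∀ v : V, a du_h v = dl v - da u_h v)
    (du_r : V) :
    ‖du_h - du_r‖ ≤
      α⁻¹ * (‖da‖ * (α⁻¹ * ‖l - a u_r‖) + ‖dl - da u_r - a du_r‖) := by
  have h_primal : ‖u_h - u_r‖ ≤ α⁻¹ * ‖l - a u_r‖ := norm_sub_le_of_coercive hα ha_coer hu_h
  have h_sens : ‖du_h - du_r‖ ≤ α⁻¹ * ‖dl - da u_r - a du_r - da (u_h - u_r)‖ :=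
    norm_le_inv_mul_opNorm_of_coercive hα ha_coer <| le_of_eq <| by
      simp only [map_sub, sub_apply, hdu_h]
      ring
  have h_res : ‖dl - da u_r - a du_r - da (u_h - u_r)‖ ≤
      ‖da‖ * (α⁻¹ * ‖l - a u_r‖) + ‖dl - da u_r - a du_r‖ :=
    calc _ ≤ ‖dl - da u_r - a du_r‖ + ‖da‖ * ‖u_h - u_r‖ :=
          (norm_sub_le _ _).trans (by gcongr; exact da.le_opNorm _)
      _ ≤ _ := by rw [add_comm]; gcongr
  exact h_sens.trans (by gcongr)

/-- Residual-based upper bound on the model reduction error of the primal sensitivity: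
`‖du_h − du_r‖ ≤ Δ_dpr := α⁻¹ (‖da‖ Δ_pr + ‖r^{pr,d}(u_r, du_r)‖)`, where
`r^{pr,d}(u, du)[v] := dl(v) − da(u, v) − a(du, v)`. -/
theorem stmt_15
    {V : Type*} [NormedAddCommGroup V] [InnerProductSpace ℝ V] [CompleteSpace V]
    (a : V →L[ℝ] V →L[ℝ] ℝ) (l : V →L[ℝ] ℝ)
    (α : ℝ) (hα : 0 < α)
    (ha_sym : ∀ v w : V, a v w = a w v)
    (ha_coer : ∀ v : V, α * ‖v‖ ^ 2 ≤ a v v)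
    (u_h : V) (hu_h : ∀ v : V, a u_h v = l v)
    (Vpr : Submodule ℝ V) (hVpr : IsClosed (Vpr : Set V))
    (u_r : V) (hu_r_mem : u_r ∈ Vpr) (hu_r : ∀ v ∈ Vpr, a u_r v = l v)
    (dl : V →L[ℝ] ℝ) (da : V →L[ℝ] V →L[ℝ] ℝ)
    (du_h : V) (hdu_h : ∀ v : V, a du_h v = dl v - da u_h v)
    (Wpr : Submodule ℝ V) (hWpr : IsClosed (Wpr : Set V))
    (du_r : V) (hdu_r_mem : du_r ∈ Wpr)
    (hdu_r : ∀ v ∈ Wpr, a du_r v = dl v - da u_r v) :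
    ‖du_h - du_r‖ ≤
      α⁻¹ * (‖da‖ * (α⁻¹ * ‖l - a u_r‖) + ‖dl - da u_r - a du_r‖) :=
  stmt_15_general a l α hα ha_coer u_h hu_h u_r dl da du_h hdu_h du_r
end

section
/- Residual-based upper bound on the model reduction error of the dual sensitivity: ‖dp_h − dp_r‖ ≤ α⁻¹ (2‖dk‖ Δ_pr + ‖da‖ Δ_du + 2‖k‖ Δ_dpr + ‖r^{du,d}(u_r, p_r, du_r, dp_r)‖). -/
/-!
Each of the four errors `e` solves a coercive problem `a e = ρ` (or `a.flip e = ρ`), obtained by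
subtracting the equation evaluated at the reduced quantities from the exact one. The right-hand
side `ρ` is the residual of the reduced quantities plus the terms coupling to the previously
estimated errors, so coercivity `α ‖e‖² ≤ a e e = ρ e ≤ ‖ρ‖ ‖e‖` bounds `‖e‖` by `α⁻¹ ‖ρ‖`, and
the four bounds are chained.
-/

open ContinuousLinearMap

section FlipBounds

variable {E F G : Type*} [NormedAddCommGroup E] [NormedSpace ℝ E] [NormedAddCommGroup F]
  [NormedSpace ℝ F] [NormedAddCommGroup G] [NormedSpace ℝ G]

theorem norm_flip_apply_le (b : E →L[ℝ] F →L[ℝ] G) (x : F) : ‖b.flip x‖ ≤ ‖b‖ * ‖x‖ :=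
  opNorm_flip b ▸ b.flip.le_opNorm x

theorem norm_two_smul_flip_apply_le (b : E →L[ℝ] F →L[ℝ] G) (x : F) :
    ‖(2 : ℝ) • b.flip x‖ ≤ 2 * ‖b‖ * ‖x‖ := by
  rw [norm_smul, Real.norm_two, mul_assoc]
  gcongr
  exact norm_flip_apply_le b x

end FlipBounds

section CoerciveProblems

variable {V : Type*} [NormedAddCommGroup V] [NormedSpace ℝ V]
  {a : V →L[ℝ] V →L[ℝ] ℝ} {α : ℝ}

theorem norm_le_inv_mul_norm_of_coercive (hα : 0 < α) (ha_coer : ∀ v : V, α * ‖v‖ ^ 2 ≤ a v v)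
    (e : V) : ‖e‖ ≤ α⁻¹ * ‖a e‖ := by
  have hcoer : α * ‖e‖ ^ 2 ≤ ‖a e‖ * ‖e‖ :=
    (ha_coer e).trans ((le_abs_self _).trans ((a e).le_opNorm e))
  rw [le_inv_mul_iff₀ hα]
  rcases (norm_nonneg e).eq_or_lt with he | he
  · simp [← he]
  · nlinarith

theorem norm_le_inv_mul_norm_flip_of_coercive (hα : 0 < α)
    (ha_coer : ∀ v : V, α * ‖v‖ ^ 2 ≤ a v v) (e : V) : ‖e‖ ≤ α⁻¹ * ‖a.flip e‖ :=
  norm_le_inv_mul_norm_of_coercive (a := a.flip) hα ha_coer e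

section ErrorBounds

variable {k da dk : V →L[ℝ] V →L[ℝ] ℝ} {l j dl dj : V →L[ℝ] ℝ}
  {u_h p_h du_h dp_h : V} (u_r p_r du_r dp_r : V)

theorem primal_error_le (hα : 0 < α) (ha_coer : ∀ v : V, α * ‖v‖ ^ 2 ≤ a v v)
    (hu_h : ∀ v : V, a u_h v = l v) :
    ‖u_h - u_r‖ ≤ α⁻¹ * ‖l - a u_r‖ := by
  have herr : a (u_h - u_r) = l - a u_r := by
    ext v
    simp [hu_h]
  simpa [herr] using norm_le_inv_mul_norm_of_coercive hα ha_coer (u_h - u_r)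

theorem dual_error_le (hα : 0 < α) (ha_coer : ∀ v : V, α * ‖v‖ ^ 2 ≤ a v v)
    (hp_h : ∀ v : V, a v p_h = j v + 2 * k v u_h) :
    ‖p_h - p_r‖ ≤
      α⁻¹ * (2 * ‖k‖ * ‖u_h - u_r‖ + ‖j + (2 : ℝ) • k.flip u_r - a.flip p_r‖) := by
  have herr : a.flip (p_h - p_r) =
      (2 : ℝ) • k.flip (u_h - u_r) + (j + (2 : ℝ) • k.flip u_r - a.flip p_r) := by
    ext v
    simp [hp_h]
    ring
  calc ‖p_h - p_r‖ ≤ α⁻¹ * ‖a.flip (p_h - p_r)‖ :=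
        norm_le_inv_mul_norm_flip_of_coercive hα ha_coer _
    _ ≤ α⁻¹ * (‖(2 : ℝ) • k.flip (u_h - u_r)‖ + ‖j + (2 : ℝ) • k.flip u_r - a.flip p_r‖) := by
        rw [herr]
        gcongr
        exact norm_add_le _ _
    _ ≤ _ := by
        gcongr
        exact norm_two_smul_flip_apply_le k _

theorem primal_sensitivity_error_le (hα : 0 < α) (ha_coer : ∀ v : V, α * ‖v‖ ^ 2 ≤ a v v)
    (hdu_h : ∀ v : V, a du_h v = dl v - da u_h v) :
    ‖du_h - du_r‖ ≤ α⁻¹ * (‖da‖ * ‖u_h - u_r‖ + ‖dl - da u_r - a du_r‖) := by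
  have herr : a (du_h - du_r) = (dl - da u_r - a du_r) - da (u_h - u_r) := by
    ext v
    simp [hdu_h]
    ring
  calc ‖du_h - du_r‖ ≤ α⁻¹ * ‖a (du_h - du_r)‖ :=
        norm_le_inv_mul_norm_of_coercive hα ha_coer _
    _ ≤ α⁻¹ * (‖da (u_h - u_r)‖ + ‖dl - da u_r - a du_r‖) := by
        rw [herr, add_comm]
        gcongr
        exact norm_sub_le _ _
    _ ≤ _ := by
        gcongr
        exact da.le_opNorm _

theorem dual_sensitivity_error_le (hα : 0 < α) (ha_coer : ∀ v : V, α * ‖v‖ ^ 2 ≤ a v v)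
    (hdp_h : ∀ q : V, a q dp_h = dj q + 2 * dk q u_h - da q p_h + 2 * k q du_h) :
    ‖dp_h - dp_r‖ ≤
      α⁻¹ * (2 * ‖dk‖ * ‖u_h - u_r‖ + ‖da‖ * ‖p_h - p_r‖ + 2 * ‖k‖ * ‖du_h - du_r‖
        + ‖dj + (2 : ℝ) • dk.flip u_r - da.flip p_r + (2 : ℝ) • k.flip du_r - a.flip dp_r‖) := by
  set R := dj + (2 : ℝ) • dk.flip u_r - da.flip p_r + (2 : ℝ) • k.flip du_r - a.flip dp_r
  have herr : a.flip (dp_h - dp_r) = (2 : ℝ) • dk.flip (u_h - u_r) - da.flip (p_h - p_r)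
      + (2 : ℝ) • k.flip (du_h - du_r) + R := by
    ext q
    simp [R, hdp_h]
    ring
  have hsplit : ‖a.flip (dp_h - dp_r)‖ ≤ ‖(2 : ℝ) • dk.flip (u_h - u_r)‖
      + ‖da.flip (p_h - p_r)‖ + ‖(2 : ℝ) • k.flip (du_h - du_r)‖ + ‖R‖ := by
    rw [herr]
    linarith [norm_add_le ((2 : ℝ) • dk.flip (u_h - u_r) - da.flip (p_h - p_r)
        + (2 : ℝ) • k.flip (du_h - du_r)) R,
      norm_add_le ((2 : ℝ) • dk.flip (u_h - u_r) - da.flip (p_h - p_r))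
        ((2 : ℝ) • k.flip (du_h - du_r)),
      norm_sub_le ((2 : ℝ) • dk.flip (u_h - u_r)) (da.flip (p_h - p_r))]
  calc ‖dp_h - dp_r‖ ≤ α⁻¹ * ‖a.flip (dp_h - dp_r)‖ :=
        norm_le_inv_mul_norm_flip_of_coercive hα ha_coer _
    _ ≤ _ := by
        gcongr
        refine hsplit.trans ?_
        gcongr
        · exact norm_two_smul_flip_apply_le dk _
        · exact norm_flip_apply_le da _
        · exact norm_two_smul_flip_apply_le k _

end ErrorBounds

end CoerciveProblems

theorem stmt_16_general
    {V : Type*} [NormedAddCommGroup V] [InnerProductSpace ℝ V]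
    (a : V →L[ℝ] V →L[ℝ] ℝ) (l j : V →L[ℝ] ℝ) (k : V →L[ℝ] V →L[ℝ] ℝ)
    (α : ℝ) (hα : 0 < α)
    (ha_coer : ∀ v : V, α * ‖v‖ ^ 2 ≤ a v v)
    (u_h : V) (hu_h : ∀ v : V, a u_h v = l v)
    (p_h : V) (hp_h : ∀ v : V, a v p_h = j v + 2 * k v u_h)
    (u_r : V)
    (p_r : V)
    (dl dj : V →L[ℝ] ℝ) (da dk : V →L[ℝ] V →L[ℝ] ℝ)
    (du_h : V) (hdu_h : ∀ v : V, a du_h v = dl v - da u_h v)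
    (du_r : V)
    (dp_h : V)
    (hdp_h : ∀ q : V, a q dp_h = dj q + 2 * dk q u_h - da q p_h + 2 * k q du_h)
    (dp_r : V) :
    ‖dp_h - dp_r‖ ≤
      α⁻¹ * (2 * ‖dk‖ * (α⁻¹ * ‖l - a u_r‖)
        + ‖da‖ * (α⁻¹ * (2 * ‖k‖ * (α⁻¹ * ‖l - a u_r‖)
            + ‖j + (2 : ℝ) • k.flip u_r - a.flip p_r‖))
        + 2 * ‖k‖ * (α⁻¹ * (‖da‖ * (α⁻¹ * ‖l - a u_r‖) + ‖dl - da u_r - a du_r‖))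
        + ‖dj + (2 : ℝ) • dk.flip u_r - da.flip p_r + (2 : ℝ) • k.flip du_r
            - a.flip dp_r‖) := by
  have h_pr := primal_error_le u_r hα ha_coer hu_h
  have h_du := dual_error_le u_r p_r hα ha_coer hp_h
  have h_dpr := primal_sensitivity_error_le u_r du_r hα ha_coer hdu_h
  refine (dual_sensitivity_error_le u_r p_r du_r dp_r hα ha_coer hdp_h).trans ?_
  gcongr
  · exact h_du.trans (by gcongr)
  · exact h_dpr.trans (by gcongr)

/-- Residual-based upper bound on the model reduction error of the dual sensitivity:
`‖dp_h − dp_r‖ ≤ α⁻¹ (2‖dk‖ Δ_pr + ‖da‖ Δ_du + 2‖k‖ Δ_dpr + ‖r^{du,d}(u_r,p_r,du_r,dp_r)‖)`. -/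
theorem stmt_16
    {V : Type*} [NormedAddCommGroup V] [InnerProductSpace ℝ V] [CompleteSpace V]
    (a : V →L[ℝ] V →L[ℝ] ℝ) (l j : V →L[ℝ] ℝ) (k : V →L[ℝ] V →L[ℝ] ℝ)
    (α : ℝ) (hα : 0 < α)
    (ha_sym : ∀ v w : V, a v w = a w v)
    (ha_coer : ∀ v : V, α * ‖v‖ ^ 2 ≤ a v v)
    (hk_sym : ∀ v w : V, k v w = k w v)
    (u_h : V) (hu_h : ∀ v : V, a u_h v = l v)
    (p_h : V) (hp_h : ∀ v : V, a v p_h = j v + 2 * k v u_h)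
    (Vpr Vdu : Submodule ℝ V)
    (hVpr : IsClosed (Vpr : Set V)) (hVdu : IsClosed (Vdu : Set V))
    (u_r : V) (hu_r_mem : u_r ∈ Vpr) (hu_r : ∀ v ∈ Vpr, a u_r v = l v)
    (p_r : V) (hp_r_mem : p_r ∈ Vdu) (hp_r : ∀ q ∈ Vdu, a q p_r = j q + 2 * k q u_r)
    (dl dj : V →L[ℝ] ℝ) (da dk : V →L[ℝ] V →L[ℝ] ℝ)
    (hdk_sym : ∀ v w : V, dk v w = dk w v)
    (du_h : V) (hdu_h : ∀ v : V, a du_h v = dl v - da u_h v)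
    (Wpr : Submodule ℝ V) (hWpr : IsClosed (Wpr : Set V))
    (du_r : V) (hdu_r_mem : du_r ∈ Wpr)
    (hdu_r : ∀ v ∈ Wpr, a du_r v = dl v - da u_r v)
    (dp_h : V)
    (hdp_h : ∀ q : V, a q dp_h = dj q + 2 * dk q u_h - da q p_h + 2 * k q du_h)
    (Wdu : Submodule ℝ V) (hWdu : IsClosed (Wdu : Set V))
    (dp_r : V) (hdp_r_mem : dp_r ∈ Wdu)
    (hdp_r : ∀ q ∈ Wdu, a q dp_r = dj q + 2 * dk q u_r - da q p_r + 2 * k q du_r) :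
    ‖dp_h - dp_r‖ ≤
      α⁻¹ * (2 * ‖dk‖ * (α⁻¹ * ‖l - a u_r‖)
        + ‖da‖ * (α⁻¹ * (2 * ‖k‖ * (α⁻¹ * ‖l - a u_r‖)
            + ‖j + (2 : ℝ) • k.flip u_r - a.flip p_r‖))
        + 2 * ‖k‖ * (α⁻¹ * (‖da‖ * (α⁻¹ * ‖l - a u_r‖) + ‖dl - da u_r - a du_r‖))
        + ‖dj + (2 : ℝ) • dk.flip u_r - da.flip p_r + (2 : ℝ) • k.flip du_r
            - a.flip dp_r‖) :=
  stmt_16_general a l j k α hα ha_coer u_h hu_h p_h hp_h u_r p_r dl dj da dk du_h hdu_h du_r dp_h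
    hdp_h dp_r
end

section
/- Higher-order upper bound on the model reduction error of the sensitivity-based gradient component of the NCD-corrected functional: with g_r^s := dΘ + dj(u_r) + dk(u_r, u_r) + dl(p_r) − da(u_r, p_r) + r^pr(u_r)[dp_r] + r^du(u_r, p_r)[du_r], it holds that |g_h − g_r^s| ≤ ‖dk‖ Δ_pr² + ‖a‖ Δ_dpr Δ_du + ‖r^{du,d}(u_r, p_r, du_r, dp_r)‖ Δ_pr. -/
/-! Write `e := u_h - u_r`, `ε := p_h - p_r`, `η := du_h - du_r`. Inserting the full-order primal,
dual and sensitivity equations, the error of the corrected gradient collapses to the exact identity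
`g_h - g_r^s = r^{du,d}(u_r, p_r, du_r, dp_r)[e] + dk(e, e) + a(η, ε)`, in which every term is a
product of two errors or of a residual and an error. Testing the error equations with the error
itself and using coercivity gives `‖e‖ ≤ Δ_pr`, `‖ε‖ ≤ Δ_du` and `‖η‖ ≤ Δ_dpr`. -/

open ContinuousLinearMap

section

variable {V : Type*} [NormedAddCommGroup V] [NormedSpace ℝ V]

lemma norm_le_inv_mul_of_coercive {a : V →L[ℝ] V →L[ℝ] ℝ} {α C : ℝ} (hα : 0 < α)
    (ha_coer : ∀ v : V, α * ‖v‖ ^ 2 ≤ a v v) (hC : 0 ≤ C) {e : V} (he : a e e ≤ C * ‖e‖) :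
    ‖e‖ ≤ α⁻¹ * C := by
  rcases (norm_nonneg e).eq_or_lt with he0 | he0
  · rw [← he0]
    positivity
  · rw [le_inv_mul_iff₀ hα]
    nlinarith [ha_coer e]

section ErrorEquations

variable {a da k dk : V →L[ℝ] V →L[ℝ] ℝ} {l j dl dj : V →L[ℝ] ℝ} {u_h p_h du_h : V}

lemma primal_error_eq (hu_h : ∀ v, a u_h v = l v) (u_r v : V) :
    a (u_h - u_r) v = (l - a u_r) v := by
  simp [hu_h]

lemma dual_error_eq (hp_h : ∀ v, a v p_h = j v + 2 * k v u_h) (u_r p_r v : V) :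
    a v (p_h - p_r) = (j + (2 : ℝ) • k.flip u_r - a.flip p_r) v + 2 * k v (u_h - u_r) := by
  simp only [map_sub, add_apply, sub_apply, smul_apply, flip_apply, smul_eq_mul, hp_h]
  ring

lemma sensitivity_error_eq (hdu_h : ∀ v, a du_h v = dl v - da u_h v) (u_r du_r v : V) :
    a (du_h - du_r) v = (dl - da u_r - a du_r) v - da (u_h - u_r) v := by
  simp only [map_sub, sub_apply, hdu_h]
  ring

lemma gradient_error_eq (hk_sym : ∀ v w : V, k v w = k w v)
    (hdk_sym : ∀ v w : V, dk v w = dk w v) (hu_h : ∀ v, a u_h v = l v)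
    (hp_h : ∀ v, a v p_h = j v + 2 * k v u_h) (hdu_h : ∀ v, a du_h v = dl v - da u_h v)
    (dΘ : ℝ) (u_r p_r du_r dp_r : V) :
    (dΘ + dj u_h + dk u_h u_h + dl p_h - da u_h p_h)
        - (dΘ + dj u_r + dk u_r u_r + dl p_r - da u_r p_r
            + (l dp_r - a u_r dp_r) + (j du_r + 2 * k du_r u_r - a du_r p_r))
      = (dj + (2 : ℝ) • dk.flip u_r - da.flip p_r + (2 : ℝ) • k.flip du_r - a.flip dp_r)
          (u_h - u_r)
        + dk (u_h - u_r) (u_h - u_r) + a (du_h - du_r) (p_h - p_r) := by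
  simp only [add_apply, sub_apply, smul_apply, flip_apply, smul_eq_mul, map_sub]
  rw [hu_h dp_r, hdu_h p_h, hdu_h p_r, hp_h du_r, hk_sym u_r du_r, hdk_sym u_r u_h,
    hk_sym u_h du_r]
  ring

end ErrorEquations

section ErrorBounds

variable {a : V →L[ℝ] V →L[ℝ] ℝ} {α : ℝ} (hα : 0 < α) (ha_coer : ∀ v : V, α * ‖v‖ ^ 2 ≤ a v v)
include hα ha_coer

lemma norm_primal_error_le {l : V →L[ℝ] ℝ} {e u_r : V} (he : ∀ v, a e v = (l - a u_r) v) :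
    ‖e‖ ≤ α⁻¹ * ‖l - a u_r‖ :=
  norm_le_inv_mul_of_coercive hα ha_coer (norm_nonneg _) <| by
    rw [he]
    exact (Real.le_norm_self _).trans (le_opNorm _ _)

lemma norm_dual_error_le {k : V →L[ℝ] V →L[ℝ] ℝ} {r : V →L[ℝ] ℝ} {e ε : V} {δ : ℝ}
    (he : ‖e‖ ≤ δ) (hε : ∀ v, a v ε = r v + 2 * k v e) :
    ‖ε‖ ≤ α⁻¹ * (2 * ‖k‖ * δ + ‖r‖) := by
  have hδ : 0 ≤ δ := (norm_nonneg e).trans he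
  refine norm_le_inv_mul_of_coercive hα ha_coer (by positivity) ?_
  have hr := (Real.le_norm_self (r ε)).trans (r.le_opNorm ε)
  have hk := (Real.le_norm_self (k ε e)).trans (k.le_opNorm₂ ε e)
  have hke : ‖k‖ * ‖ε‖ * ‖e‖ ≤ ‖k‖ * ‖ε‖ * δ := by gcongr
  rw [hε]
  linarith

lemma norm_sensitivity_error_le {da : V →L[ℝ] V →L[ℝ] ℝ} {r : V →L[ℝ] ℝ} {e η : V} {δ : ℝ}
    (he : ‖e‖ ≤ δ) (hη : ∀ v, a η v = r v - da e v) :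
    ‖η‖ ≤ α⁻¹ * (‖da‖ * δ + ‖r‖) := by
  have hδ : 0 ≤ δ := (norm_nonneg e).trans he
  refine norm_le_inv_mul_of_coercive hα ha_coer (by positivity) ?_
  have hr := (Real.le_norm_self (r η)).trans (r.le_opNorm η)
  have hda := (neg_le_abs (da e η)).trans (da.le_opNorm₂ e η)
  have hdae : ‖da‖ * ‖e‖ * ‖η‖ ≤ ‖da‖ * δ * ‖η‖ := by gcongr
  rw [hη]
  linarith

end ErrorBounds

lemma abs_apply_add_apply₂_add_apply₂_le (f : V →L[ℝ] ℝ) (b c : V →L[ℝ] V →L[ℝ] ℝ)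
    {e x y : V} {δ δx δy : ℝ} (he : ‖e‖ ≤ δ) (hx : ‖x‖ ≤ δx) (hy : ‖y‖ ≤ δy) :
    |f e + b e e + c x y| ≤ ‖b‖ * δ ^ 2 + ‖c‖ * δx * δy + ‖f‖ * δ := by
  have hδ : 0 ≤ δ := (norm_nonneg e).trans he
  have hδx : 0 ≤ δx := (norm_nonneg x).trans hx
  have hf : |f e| ≤ ‖f‖ * δ := (f.le_opNorm e).trans (by gcongr)
  have hb : |b e e| ≤ ‖b‖ * δ ^ 2 :=
    (b.le_opNorm₂ e e).trans (by rw [sq, ← mul_assoc]; gcongr)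
  have hc : |c x y| ≤ ‖c‖ * δx * δy := (c.le_opNorm₂ x y).trans (by gcongr)
  linarith [abs_add_three (f e) (b e e) (c x y)]

end

theorem stmt_17_general
    {V : Type*} [NormedAddCommGroup V] [InnerProductSpace ℝ V]
    (a : V →L[ℝ] V →L[ℝ] ℝ) (l j : V →L[ℝ] ℝ) (k : V →L[ℝ] V →L[ℝ] ℝ)
    (α : ℝ) (hα : 0 < α)
    (ha_coer : ∀ v : V, α * ‖v‖ ^ 2 ≤ a v v)
    (hk_sym : ∀ v w : V, k v w = k w v)
    (u_h : V) (hu_h : ∀ v : V, a u_h v = l v)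
    (p_h : V) (hp_h : ∀ v : V, a v p_h = j v + 2 * k v u_h)
    (u_r : V) (p_r : V)
    (dΘ : ℝ) (dl dj : V →L[ℝ] ℝ) (da dk : V →L[ℝ] V →L[ℝ] ℝ)
    (hdk_sym : ∀ v w : V, dk v w = dk w v)
    (du_h : V) (hdu_h : ∀ v : V, a du_h v = dl v - da u_h v)
    (du_r : V) (dp_r : V) :
    |(dΘ + dj u_h + dk u_h u_h + dl p_h - da u_h p_h)
        - (dΘ + dj u_r + dk u_r u_r + dl p_r - da u_r p_r
            + (l dp_r - a u_r dp_r) + (j du_r + 2 * k du_r u_r - a du_r p_r))| ≤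
      ‖dk‖ * (α⁻¹ * ‖l - a u_r‖) ^ 2
        + ‖a‖ * (α⁻¹ * (‖da‖ * (α⁻¹ * ‖l - a u_r‖) + ‖dl - da u_r - a du_r‖))
          * (α⁻¹ * (2 * ‖k‖ * (α⁻¹ * ‖l - a u_r‖)
              + ‖j + (2 : ℝ) • k.flip u_r - a.flip p_r‖))
        + ‖dj + (2 : ℝ) • dk.flip u_r - da.flip p_r + (2 : ℝ) • k.flip du_r
            - a.flip dp_r‖ * (α⁻¹ * ‖l - a u_r‖) := by
  have hΔ_pr := norm_primal_error_le hα ha_coer (primal_error_eq hu_h u_r)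
  have hΔ_du := norm_dual_error_le hα ha_coer hΔ_pr (dual_error_eq hp_h u_r p_r)
  have hΔ_dpr := norm_sensitivity_error_le hα ha_coer hΔ_pr (sensitivity_error_eq hdu_h u_r du_r)
  rw [gradient_error_eq hk_sym hdk_sym hu_h hp_h hdu_h dΘ u_r p_r du_r dp_r]
  exact abs_apply_add_apply₂_add_apply₂_le _ _ _ hΔ_pr hΔ_dpr hΔ_du

/-- Higher-order upper bound on the model reduction error of the sensitivity-based
gradient component of the NCD-corrected functional:
`|g_h − g_r^s| ≤ ‖dk‖ Δ_pr² + ‖a‖ Δ_dpr Δ_du + ‖r^{du,d}(u_r,p_r,du_r,dp_r)‖ Δ_pr`. -/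
theorem stmt_17
    {V : Type*} [NormedAddCommGroup V] [InnerProductSpace ℝ V] [CompleteSpace V]
    (a : V →L[ℝ] V →L[ℝ] ℝ) (l j : V →L[ℝ] ℝ) (k : V →L[ℝ] V →L[ℝ] ℝ)
    (α : ℝ) (hα : 0 < α)
    (ha_sym : ∀ v w : V, a v w = a w v)
    (ha_coer : ∀ v : V, α * ‖v‖ ^ 2 ≤ a v v)
    (hk_sym : ∀ v w : V, k v w = k w v)
    (u_h : V) (hu_h : ∀ v : V, a u_h v = l v)
    (p_h : V) (hp_h : ∀ v : V, a v p_h = j v + 2 * k v u_h)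
    (Vpr Vdu : Submodule ℝ V)
    (hVpr : IsClosed (Vpr : Set V)) (hVdu : IsClosed (Vdu : Set V))
    (u_r : V) (hu_r_mem : u_r ∈ Vpr) (hu_r : ∀ v ∈ Vpr, a u_r v = l v)
    (p_r : V) (hp_r_mem : p_r ∈ Vdu) (hp_r : ∀ q ∈ Vdu, a q p_r = j q + 2 * k q u_r)
    (dΘ : ℝ) (dl dj : V →L[ℝ] ℝ) (da dk : V →L[ℝ] V →L[ℝ] ℝ)
    (hdk_sym : ∀ v w : V, dk v w = dk w v)
    (du_h : V) (hdu_h : ∀ v : V, a du_h v = dl v - da u_h v)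
    (Wpr Wdu : Submodule ℝ V)
    (hWpr : IsClosed (Wpr : Set V)) (hWdu : IsClosed (Wdu : Set V))
    (du_r : V) (hdu_r_mem : du_r ∈ Wpr)
    (hdu_r : ∀ v ∈ Wpr, a du_r v = dl v - da u_r v)
    (dp_r : V) (hdp_r_mem : dp_r ∈ Wdu)
    (hdp_r : ∀ q ∈ Wdu, a q dp_r = dj q + 2 * dk q u_r - da q p_r + 2 * k q du_r) :
    |(dΘ + dj u_h + dk u_h u_h + dl p_h - da u_h p_h)
        - (dΘ + dj u_r + dk u_r u_r + dl p_r - da u_r p_r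
            + (l dp_r - a u_r dp_r) + (j du_r + 2 * k du_r u_r - a du_r p_r))| ≤
      ‖dk‖ * (α⁻¹ * ‖l - a u_r‖) ^ 2
        + ‖a‖ * (α⁻¹ * (‖da‖ * (α⁻¹ * ‖l - a u_r‖) + ‖dl - da u_r - a du_r‖))
          * (α⁻¹ * (2 * ‖k‖ * (α⁻¹ * ‖l - a u_r‖)
              + ‖j + (2 : ℝ) • k.flip u_r - a.flip p_r‖))
        + ‖dj + (2 : ℝ) • dk.flip u_r - da.flip p_r + (2 : ℝ) • k.flip du_r
            - a.flip dp_r‖ * (α⁻¹ * ‖l - a u_r‖) :=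
  stmt_17_general a l j k α hα ha_coer hk_sym u_h hu_h p_h hp_h u_r p_r dΘ dl dj da dk hdk_sym du_h
    hdu_h du_r dp_r
end

section
/- Exact representation of the gradient model reduction error for the sensitivity-based NCD-corrected gradient: with e^pr := u_h − u_r, e^du := p_h − p_r and g_r^s := dΘ + dj(u_r) + dk(u_r, u_r) + dl(p_r) − da(u_r, p_r) + r^pr(u_r)[dp_r] + r^du(u_r, p_r)[du_r], it holds that g_h − g_r^s = dk(e^pr, e^pr) + a(du_h − du_r, e^du) + r^{du,d}(u_r, p_r, du_r, dp_r)[e^pr]. -/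
/-!
Everything the reduced gradient misses is expressed through the errors `e^pr = u_h - u_r` and
`e^du = p_h - p_r`: the primal and dual equations turn the two residual corrections into
`a(e^pr, dp_r)` and `a(du_r, e^du) - 2 k(du_r, e^pr)`, the sensitivity equation tested with `e^du`
absorbs `dl(e^du) - da(u_h, e^du)` into `a(du_h, e^du)`, and the symmetry of `dk` expands
`dk(u_h, u_h) - dk(u_r, u_r)` around `u_r`.
-/

section ErrorResidual

variable {V : Type*} [NormedAddCommGroup V] [NormedSpace ℝ V]

theorem apply_self_sub_apply_self_of_symm (b : V →L[ℝ] V →L[ℝ] ℝ)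
    (hb : ∀ v w : V, b v w = b w v) (x y : V) :
    b x x - b y y = b (x - y) (x - y) + 2 * b (x - y) y := by
  simp only [map_sub, sub_apply]
  linarith [hb x y]

theorem primal_residual_eq_apply_error (a : V →L[ℝ] V →L[ℝ] ℝ) {l : V →L[ℝ] ℝ} {u_h : V}
    (hu_h : ∀ v : V, a u_h v = l v) (u_r v : V) :
    l v - a u_r v = a (u_h - u_r) v := by
  rw [← hu_h, map_sub, sub_apply]

theorem dual_residual_eq_apply_error (a k : V →L[ℝ] V →L[ℝ] ℝ) {j : V →L[ℝ] ℝ} {u_h p_h : V}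
    (hp_h : ∀ v : V, a v p_h = j v + 2 * k v u_h) (u_r p_r v : V) :
    j v + 2 * k v u_r - a v p_r = a v (p_h - p_r) - 2 * k v (u_h - u_r) := by
  rw [map_sub, map_sub, hp_h]
  ring

end ErrorResidual

theorem stmt_18_general
    {V : Type*} [NormedAddCommGroup V] [InnerProductSpace ℝ V]
    (a : V →L[ℝ] V →L[ℝ] ℝ) (l j : V →L[ℝ] ℝ) (k : V →L[ℝ] V →L[ℝ] ℝ)
    (hk_sym : ∀ v w : V, k v w = k w v)
    (u_h : V) (hu_h : ∀ v : V, a u_h v = l v)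
    (p_h : V) (hp_h : ∀ v : V, a v p_h = j v + 2 * k v u_h)
    (dΘ : ℝ) (dl dj : V →L[ℝ] ℝ) (da dk : V →L[ℝ] V →L[ℝ] ℝ)
    (hdk_sym : ∀ v w : V, dk v w = dk w v)
    (du_h : V) (hdu_h : ∀ v : V, a du_h v = dl v - da u_h v)
    (u_r p_r du_r dp_r : V) :
    (dΘ + dj u_h + dk u_h u_h + dl p_h - da u_h p_h)
        - (dΘ + dj u_r + dk u_r u_r + dl p_r - da u_r p_r
            + (l dp_r - a u_r dp_r) + (j du_r + 2 * k du_r u_r - a du_r p_r)) =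
      dk (u_h - u_r) (u_h - u_r) + a (du_h - du_r) (p_h - p_r)
        + (dj (u_h - u_r) + 2 * dk (u_h - u_r) u_r - da (u_h - u_r) p_r
            + 2 * k (u_h - u_r) du_r - a (u_h - u_r) dp_r) := by
  have h_dk := apply_self_sub_apply_self_of_symm dk hdk_sym u_h u_r
  have h_sens := hdu_h (p_h - p_r)
  rw [primal_residual_eq_apply_error a hu_h u_r dp_r,
    dual_residual_eq_apply_error a k hp_h u_r p_r du_r, hk_sym du_r]
  simp only [map_sub, sub_apply] at h_dk h_sens ⊢
  linarith

/-- Exact representation of the gradient model reduction error for the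
sensitivity-based NCD-corrected gradient: with `e^pr := u_h − u_r`, `e^du := p_h − p_r`,
`g_h − g_r^s = dk(e^pr, e^pr) + a(du_h − du_r, e^du) + r^{du,d}(u_r,p_r,du_r,dp_r)[e^pr]`. -/
theorem stmt_18
    {V : Type*} [NormedAddCommGroup V] [InnerProductSpace ℝ V] [CompleteSpace V]
    (a : V →L[ℝ] V →L[ℝ] ℝ) (l j : V →L[ℝ] ℝ) (k : V →L[ℝ] V →L[ℝ] ℝ)
    (α : ℝ) (hα : 0 < α)
    (ha_sym : ∀ v w : V, a v w = a w v)
    (ha_coer : ∀ v : V, α * ‖v‖ ^ 2 ≤ a v v)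
    (hk_sym : ∀ v w : V, k v w = k w v)
    (u_h : V) (hu_h : ∀ v : V, a u_h v = l v)
    (p_h : V) (hp_h : ∀ v : V, a v p_h = j v + 2 * k v u_h)
    (dΘ : ℝ) (dl dj : V →L[ℝ] ℝ) (da dk : V →L[ℝ] V →L[ℝ] ℝ)
    (hdk_sym : ∀ v w : V, dk v w = dk w v)
    (du_h : V) (hdu_h : ∀ v : V, a du_h v = dl v - da u_h v)
    (u_r p_r du_r dp_r : V) :
    (dΘ + dj u_h + dk u_h u_h + dl p_h - da u_h p_h)
        - (dΘ + dj u_r + dk u_r u_r + dl p_r - da u_r p_r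
            + (l dp_r - a u_r dp_r) + (j du_r + 2 * k du_r u_r - a du_r p_r)) =
      dk (u_h - u_r) (u_h - u_r) + a (du_h - du_r) (p_h - p_r)
        + (dj (u_h - u_r) + 2 * dk (u_h - u_r) u_r - da (u_h - u_r) p_r
            + 2 * k (u_h - u_r) du_r - a (u_h - u_r) dp_r) :=
  stmt_18_general a l j k hk_sym u_h hu_h p_h hp_h dΘ dl dj da dk hdk_sym du_h hdu_h u_r p_r du_r
    dp_r
end
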